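/- arXiv:0805.3688 — 2 statements merged into one kernel-verified Lean document; each statement's English description precedes it below -/
import Mathlib

section
/- Biorthogonal theorem: For n ≥ 1 and a subset W ⊆ (ℝmax^n)^2, W is the orthogonal of a cone (i.e., there exists V ⊆ ℝmax^n with W = V⊥) if, and only if, the following four conditions hold: (i) W is a topologically closed subsemimodule of (ℝmax^n)^2; (ii) (f,f) ∈ W for every f ∈ ℝmax^n; (iii) (f,g) ∈ W implies (g,f) ∈ W; (iv) (f,g) ∈ W and (g,h) ∈ W imply (f,h) ∈ W. -/
open scoped Classical

noncomputable section

/-- The max-plus semiring `ℝmax = ℝ ∪ {-∞}`. Its `Add` is the max-plus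
"multiplication" `a ⊗ b = a + b` (with `-∞` absorbing), its `max` is the
max-plus "addition". -/
abbrev Rmax := WithBot ℝ

/-- The order topology on `WithBot ℝ` (the topology of the metric
`d(a,b) = |exp a - exp b|`). -/
instance : TopologicalSpace Rmax := Preorder.topology Rmax
instance : OrderTopology Rmax := ⟨rfl⟩

/-- Vectors of the max-plus semimodule `ℝmax^n`. -/
abbrev RmaxVec (n : ℕ) := Fin n → Rmax

/-- The max-plus linear combination `xλ ⊕ yμ`. -/
def maxComb {n : ℕ} (x y : RmaxVec n) (lam mu : Rmax) : RmaxVec n :=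
  fun i => max (x i + lam) (y i + mu)

/-- `V ⊆ ℝmax^n` is a (max-plus) subsemimodule. -/
def IsSubsemimodule {n : ℕ} (V : Set (RmaxVec n)) : Prop :=
  ∀ x ∈ V, ∀ y ∈ V, ∀ lam mu : Rmax, maxComb x y lam mu ∈ V

/-- `W ⊆ (ℝmax^n)² ≅ ℝmax^{2n}` is a (max-plus) subsemimodule,
with the entrywise operations. -/
def IsSubsemimodulePair {n : ℕ} (W : Set (RmaxVec n × RmaxVec n)) : Prop :=
  ∀ p ∈ W, ∀ q ∈ W, ∀ lam mu : Rmax,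
    (maxComb p.1 q.1 lam mu, maxComb p.2 q.2 lam mu) ∈ W

/-- A pre-congruence: a subsemimodule of `(ℝmax^n)²` containing the diagonal
and transitive. -/
def IsPrecongruence {n : ℕ} (W : Set (RmaxVec n × RmaxVec n)) : Prop :=
  IsSubsemimodulePair W ∧ (∀ f : RmaxVec n, (f, f) ∈ W) ∧
    ∀ f g h : RmaxVec n, (f, g) ∈ W → (g, h) ∈ W → (f, h) ∈ W

/-- A polar cone: a pre-congruence such that `f ≤ g` implies `(f,g) ∈ W`. -/
def IsPolarCone {n : ℕ} (W : Set (RmaxVec n × RmaxVec n)) : Prop :=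
  IsPrecongruence W ∧ ∀ f g : RmaxVec n, f ≤ g → (f, g) ∈ W

/-- A congruence: a symmetric pre-congruence. -/
def IsCongruence {n : ℕ} (W : Set (RmaxVec n × RmaxVec n)) : Prop :=
  IsPrecongruence W ∧ ∀ f g : RmaxVec n, (f, g) ∈ W → (g, f) ∈ W

/-- The max-plus bracket `⟨y, x⟩ = max_i (y_i + x_i)`. -/
def mpBracket {n : ℕ} (y x : RmaxVec n) : Rmax :=
  Finset.univ.sup fun i => y i + x i

/-- The polar `V°` of `V ⊆ ℝmax^n`. -/
def mpPolar {n : ℕ} (V : Set (RmaxVec n)) : Set (RmaxVec n × RmaxVec n) :=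
  { p | ∀ x ∈ V, mpBracket p.1 x ≤ mpBracket p.2 x }

/-- The orthogonal `V⊥` of `V ⊆ ℝmax^n`. -/
def mpOrtho {n : ℕ} (V : Set (RmaxVec n)) : Set (RmaxVec n × RmaxVec n) :=
  { p | ∀ x ∈ V, mpBracket p.1 x = mpBracket p.2 x }

/-- The dual polar `W⋄` of `W ⊆ (ℝmax^n)²`. -/
def mpDiamond {n : ℕ} (W : Set (RmaxVec n × RmaxVec n)) : Set (RmaxVec n) :=
  { x | ∀ p ∈ W, mpBracket p.1 x ≤ mpBracket p.2 x }

/-- The dual orthogonal `W⊤` of `W ⊆ (ℝmax^n)²`. -/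
def mpTop {n : ℕ} (W : Set (RmaxVec n × RmaxVec n)) : Set (RmaxVec n) :=
  { x | ∀ p ∈ W, mpBracket p.1 x = mpBracket p.2 x }

/-!
Writing `~` for `W`, the inclusion `W ⊆ (W⊤)⊥` is trivial. Conversely, let `(f, g) ∈ (W⊤)⊥`.
Replacing the pair by `(f ⊕ g, g)` and `(f ⊕ g, f)`, and then by its truncations
`(F ⊕ c, g ⊕ c)` with `c → -∞` (`W` is closed), we may assume `g ≤ F` and that `g` has finite
entries. Let `V` be the class of `g` and `x := -sup V` coordinatewise. Then `⟨h, x⟩ ≤ 0` on `V`,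
and whenever `⟨b, x⟩ < μ` some `h ∈ V` dominates `b - μ`, since `V` is closed under `⊕`. The
latter makes `x ∈ W⊤`: if `a ~ b` and `b - μ ≤ h ∈ V` then `(a - μ) ⊕ h ~ (b - μ) ⊕ h = h ~ g`,
so `⟨a, x⟩ ≤ μ`. Hence `⟨F, x⟩ = ⟨g, x⟩ ≤ 0`, so for every `δ > 0` some `h ∈ V` dominates
`F - δ`. Since `V` is order-convex above `g`, it contains `(F - δ) ⊕ g`, which tends to `F`;
closedness gives `F ~ g`.
-/

open Filter Topology

lemma SupClosed.exists_mem_forall_le {ι α : Type*} [Fintype ι] [SemilatticeSup α] {V : Set α}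
    (hV : SupClosed V) (hne : V.Nonempty) {f : ι → α} (hf : ∀ i, f i ∈ V) :
    ∃ a ∈ V, ∀ i, f i ≤ a := by
  rcases isEmpty_or_nonempty ι with hι | hι
  · exact ⟨hne.some, hne.some_mem, isEmptyElim⟩
  · exact ⟨Finset.univ.sup' Finset.univ_nonempty f,
      hV.finsetSup'_mem _ fun i _ => hf i, fun i => Finset.le_sup' f (Finset.mem_univ i)⟩

namespace Rmax

lemma add_coe_le_coe_iff {a : Rmax} {r s : ℝ} : a + r ≤ s ↔ a ≤ ((s - r : ℝ) : Rmax) := by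
  induction a using WithBot.recBotCoe with
  | bot => simp
  | coe t => norm_cast; constructor <;> intro <;> linarith

def addCoeOrderIso (r : ℝ) : Rmax ≃o Rmax where
  toFun a := a + r
  invFun a := a + ((-r : ℝ) : Rmax)
  left_inv a := by
    simp only
    rw [add_assoc, ← WithBot.coe_add, add_neg_cancel, WithBot.coe_zero, add_zero]
  right_inv a := by
    simp only
    rw [add_assoc, ← WithBot.coe_add, neg_add_cancel, WithBot.coe_zero, add_zero]
  map_rel_iff' := WithBot.add_le_add_iff_right WithBot.coe_ne_bot

lemma continuous_add_const (c : Rmax) : Continuous fun a : Rmax => a + c := by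
  induction c using WithBot.recBotCoe with
  | bot => simp only [WithBot.add_bot]; exact continuous_const
  | coe r => exact (addCoeOrderIso r).continuous

lemma continuous_const_add (c : Rmax) : Continuous fun a : Rmax => c + a := by
  simpa only [add_comm] using continuous_add_const c

lemma finset_sup_add {ι : Type*} (s : Finset ι) (f : ι → Rmax) (a : Rmax) :
    s.sup f + a = s.sup fun i => f i + a :=
  Finset.apply_sup_eq_sup_comp (· + a) (fun b c => (max_add_add_right b c a).symm)
    (WithBot.bot_add a)

-- For empty `S` this is the junk value `-sSup ∅ = 0`; `S` is nonempty wherever it matters.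
def negSup (S : Set ℝ) : Rmax :=
  if BddAbove S then ((-sSup S : ℝ) : Rmax) else ⊥

lemma coe_add_negSup_nonpos {S : Set ℝ} {t : ℝ} (ht : t ∈ S) : (t : Rmax) + negSup S ≤ 0 := by
  unfold negSup
  split_ifs with hS
  · norm_cast
    linarith [le_csSup hS ht]
  · simp

lemma exists_mem_add_coe_neg_le_of_add_negSup_lt {S : Set ℝ} (hS : S.Nonempty) {b : Rmax}
    {μ : ℝ} (hb : b + negSup S < μ) : ∃ t ∈ S, b + ((-μ : ℝ) : Rmax) ≤ t := by
  induction b using WithBot.recBotCoe with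
  | bot =>
    obtain ⟨t, ht⟩ := hS
    exact ⟨t, ht, by simp⟩
  | coe r =>
    suffices ∃ t ∈ S, r - μ < t by
      obtain ⟨t, ht, hrt⟩ := this
      exact ⟨t, ht, by norm_cast; linarith⟩
    unfold negSup at hb
    split_ifs at hb with hbdd
    · norm_cast at hb
      exact exists_lt_of_lt_csSup hS (by linarith)
    · simpa using not_bddAbove_iff.1 hbdd (r - μ)

end Rmax

open Rmax

section Vectors

variable {n : ℕ}

lemma maxComb_zero_zero (x y : RmaxVec n) : maxComb x y 0 0 = x ⊔ y := by
  ext j; simp [maxComb]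

lemma maxComb_bot_right (x y : RmaxVec n) : maxComb x y 0 ⊥ = x := by
  ext j; simp [maxComb]

lemma maxComb_mono {x x' y : RmaxVec n} (h : x ≤ x') (lam mu : Rmax) :
    maxComb x y lam mu ≤ maxComb x' y lam mu := fun j =>
  max_le_max (add_le_add_left (h j) lam) le_rfl

lemma continuous_maxComb_coeffs (x y : RmaxVec n) :
    Continuous fun c : Rmax × Rmax => maxComb x y c.1 c.2 :=
  continuous_pi fun j =>
    ((continuous_const_add (x j)).comp continuous_fst).max
      ((continuous_const_add (y j)).comp continuous_snd)

lemma mpBracket_maxComb (y z x : RmaxVec n) (lam mu : Rmax) :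
    mpBracket (maxComb y z lam mu) x = max (mpBracket y x + lam) (mpBracket z x + mu) := by
  simp only [mpBracket, maxComb, finset_sup_add]
  rw [← Finset.sup_sup]
  congr 1
  ext i
  simp only [Pi.sup_apply, ← max_add_add_right, add_right_comm]

lemma continuous_mpBracket (x : RmaxVec n) : Continuous fun y : RmaxVec n => mpBracket y x :=
  Continuous.finset_sup_apply fun i _ => (continuous_add_const (x i)).comp (continuous_apply i)

lemma isClosed_mpOrtho (V : Set (RmaxVec n)) : IsClosed (mpOrtho V) := by
  simp only [mpOrtho, Set.ofPred_forall]
  exact isClosed_biInter fun x _ => isClosed_eq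
    ((continuous_mpBracket x).comp continuous_fst) ((continuous_mpBracket x).comp continuous_snd)

lemma isCongruence_mpOrtho (V : Set (RmaxVec n)) : IsCongruence (mpOrtho V) := by
  refine ⟨⟨fun p hp q hq lam mu x hx => ?_, fun f x _ => rfl,
    fun f g h hfg hgh x hx => (hfg x hx).trans (hgh x hx)⟩, fun f g hfg x hx => (hfg x hx).symm⟩
  simp only [mpBracket_maxComb, hp x hx, hq x hx]

lemma subset_mpOrtho_mpTop (W : Set (RmaxVec n × RmaxVec n)) : W ⊆ mpOrtho (mpTop W) :=
  fun p hp _ hx => hx p hp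

def negCoordSup (V : Set (RmaxVec n)) : RmaxVec n :=
  fun j => negSup {r : ℝ | ∃ h ∈ V, h j = r}

lemma mpBracket_negCoordSup_nonpos {V : Set (RmaxVec n)} {h : RmaxVec n} (hh : h ∈ V) :
    mpBracket h (negCoordSup V) ≤ 0 := by
  refine Finset.sup_le fun j _ => ?_
  by_cases hj : h j = ⊥
  · simp [hj]
  · obtain ⟨r, hr⟩ := WithBot.ne_bot_iff_exists.1 hj
    rw [← hr]
    exact coe_add_negSup_nonpos ⟨h, hh, hr.symm⟩

lemma exists_mem_forall_add_coe_neg_le {V : Set (RmaxVec n)} (hV : SupClosed V)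
    (hfin : ∃ g ∈ V, ∀ j, g j ≠ ⊥) {b : RmaxVec n} {μ : ℝ}
    (hb : mpBracket b (negCoordSup V) < μ) : ∃ h ∈ V, ∀ j, b j + ((-μ : ℝ) : Rmax) ≤ h j := by
  obtain ⟨g, hgV, hg⟩ := hfin
  have hcoord : ∀ j, ∃ h ∈ V, b j + ((-μ : ℝ) : Rmax) ≤ h j := by
    intro j
    have hS : {r : ℝ | ∃ h ∈ V, h j = r}.Nonempty := by
      obtain ⟨r, hr⟩ := WithBot.ne_bot_iff_exists.1 (hg j)
      exact ⟨r, g, hgV, hr.symm⟩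
    have hbj : b j + negCoordSup V j < μ :=
      (Finset.sup_lt_iff (WithBot.bot_lt_coe μ)).1 hb j (Finset.mem_univ j)
    obtain ⟨t, ⟨h, hh, hht⟩, hbt⟩ := exists_mem_add_coe_neg_le_of_add_negSup_lt hS hbj
    exact ⟨h, hh, hht ▸ hbt⟩
  choose h hhV hbh using hcoord
  obtain ⟨H, hHV, hH⟩ := hV.exists_mem_forall_le ⟨g, hgV⟩ hhV
  exact ⟨H, hHV, fun j => (hbh j).trans (hH j j)⟩

end Vectors

section Congruence

variable {n : ℕ} {W : Set (RmaxVec n × RmaxVec n)}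

lemma IsSubsemimodulePair.sup_mem (hW : IsSubsemimodulePair W) {a b a' b' : RmaxVec n}
    (h : (a, b) ∈ W) (h' : (a', b') ∈ W) : (a ⊔ a', b ⊔ b') ∈ W := by
  simpa only [maxComb_zero_zero] using hW _ h _ h' 0 0

lemma IsCongruence.sup_mem_of_mem (hW : IsCongruence W) {f g : RmaxVec n} (h : (f, g) ∈ W) :
    (f ⊔ g, g) ∈ W := by
  obtain ⟨⟨hmod, hrefl, -⟩, -⟩ := hW
  simpa only [sup_idem] using IsSubsemimodulePair.sup_mem hmod h (hrefl g)

lemma IsCongruence.mem_of_le_of_le (hW : IsCongruence W) {g z h : RmaxVec n} (hh : (h, g) ∈ W)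
    (hgz : g ≤ z) (hzh : z ≤ h) : (z, g) ∈ W := by
  obtain ⟨⟨hmod, hrefl, htrans⟩, hsymm⟩ := hW
  have hhz : (h, z) ∈ W := by
    simpa only [sup_eq_left.2 hzh, sup_eq_right.2 hgz] using
      IsSubsemimodulePair.sup_mem hmod hh (hrefl z)
  exact htrans _ _ _ (hsymm _ _ hhz) hh

lemma IsSubsemimodulePair.supClosed_setOf_mem (hW : IsSubsemimodulePair W) (g : RmaxVec n) :
    SupClosed {h | (h, g) ∈ W} := fun _ h _ h' => by
  simpa only [Set.mem_ofPred_eq, sup_idem] using IsSubsemimodulePair.sup_mem hW h h'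

lemma IsCongruence.negCoordSup_mem_mpTop (hW : IsCongruence W) {g : RmaxVec n} (hg : ∀ j, g j ≠ ⊥) :
    negCoordSup {h | (h, g) ∈ W} ∈ mpTop W := by
  obtain ⟨⟨hmod, hrefl, htrans⟩, hsymm⟩ := hW
  set x := negCoordSup {h | (h, g) ∈ W}
  suffices key : ∀ a b, (a, b) ∈ W → mpBracket a x ≤ mpBracket b x from
    fun p hp => (key _ _ hp).antisymm (key _ _ (hsymm _ _ hp))
  intro a b hab
  refine le_of_forall_gt_imp_ge_of_dense fun μ hμ => ?_
  lift μ to ℝ using (bot_le.trans_lt hμ).ne'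
  obtain ⟨h, hh, hbh⟩ := exists_mem_forall_add_coe_neg_le
    (IsSubsemimodulePair.supClosed_setOf_mem hmod g) ⟨g, hrefl g, hg⟩ hμ
  have hb' : maxComb b h ((-μ : ℝ) : Rmax) 0 = h := funext fun j => by simp [maxComb, hbh j]
  have hah : (maxComb a h ((-μ : ℝ) : Rmax) 0, h) ∈ W := by
    simpa only [hb'] using hmod _ hab _ (hrefl h) ((-μ : ℝ) : Rmax) 0
  have ha' : maxComb a h ((-μ : ℝ) : Rmax) 0 ∈ {h' | (h', g) ∈ W} := htrans _ _ _ hah hh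
  have hbound := mpBracket_negCoordSup_nonpos ha'
  rw [mpBracket_maxComb] at hbound
  have h0 : mpBracket a x + ((-μ : ℝ) : Rmax) ≤ ((0 : ℝ) : Rmax) := (le_max_left _ _).trans hbound
  simpa using add_coe_le_coe_iff.1 h0

lemma IsCongruence.mem_of_forall_pos_exists_le (hW : IsCongruence W) (hcl : IsClosed W)
    {F g : RmaxVec n} (hgF : g ≤ F)
    (hF : ∀ δ : ℝ, 0 < δ → ∃ h, (h, g) ∈ W ∧ ∀ j, F j + ((-δ : ℝ) : Rmax) ≤ h j) :
    (F, g) ∈ W := by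
  have hmem : ∀ δ : ℝ, 0 < δ → (maxComb F g ((-δ : ℝ) : Rmax) 0, g) ∈ W := by
    intro δ hδ
    obtain ⟨h, hh, hFh⟩ := hF δ hδ
    refine hW.mem_of_le_of_le (hW.sup_mem_of_mem hh) (fun j => ?_) (fun j => ?_)
    · simp [maxComb]
    · simpa [maxComb] using max_le_max (hFh j) le_rfl
  have hlim : Tendsto (fun δ : ℝ => (maxComb F g ((-δ : ℝ) : Rmax) 0, g)) (𝓝[>] 0) (𝓝 (F, g)) := by
    have hcont : Continuous fun δ : ℝ => maxComb F g ((-δ : ℝ) : Rmax) 0 :=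
      (continuous_maxComb_coeffs F g).comp
        ((WithBot.continuous_coe.comp continuous_neg).prodMk continuous_const)
    have := hcont.tendsto 0
    rw [neg_zero, WithBot.coe_zero, maxComb_zero_zero, sup_eq_left.2 hgF] at this
    exact (this.mono_left nhdsWithin_le_nhds).prodMk_nhds tendsto_const_nhds
  exact hcl.mem_of_tendsto hlim (eventually_nhdsWithin_of_forall hmem)

lemma IsCongruence.mem_of_mem_mpOrtho_mpTop_of_le_of_ne_bot (hW : IsCongruence W)
    (hcl : IsClosed W)
    {F g : RmaxVec n} (hgF : g ≤ F) (hg : ∀ j, g j ≠ ⊥) (hFg : (F, g) ∈ mpOrtho (mpTop W)) :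
    (F, g) ∈ W := by
  have hgg : (g, g) ∈ W := hW.1.2.1 g
  refine hW.mem_of_forall_pos_exists_le hcl hgF fun δ hδ => exists_mem_forall_add_coe_neg_le
    (IsSubsemimodulePair.supClosed_setOf_mem hW.1.1 g) ⟨g, hgg, hg⟩ ?_
  calc mpBracket F (negCoordSup {h | (h, g) ∈ W})
      = mpBracket g (negCoordSup {h | (h, g) ∈ W}) := hFg _ (hW.negCoordSup_mem_mpTop hg)
    _ ≤ 0 := mpBracket_negCoordSup_nonpos hgg
    _ < δ := by exact_mod_cast hδ

lemma IsCongruence.mem_of_mem_mpOrtho_mpTop_of_le (hW : IsCongruence W) (hcl : IsClosed W)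
    {F g : RmaxVec n} (hgF : g ≤ F) (hFg : (F, g) ∈ mpOrtho (mpTop W)) : (F, g) ∈ W := by
  -- `e` is the max-plus unit vector, so `maxComb x e 0 c` is `x` truncated below at level `c`.
  set e : RmaxVec n := fun _ => 0
  obtain ⟨⟨hmod, hrefl, -⟩, -⟩ := isCongruence_mpOrtho (mpTop W)
  have hmem : ∀ c ∈ Set.Ioi (⊥ : Rmax), (maxComb F e 0 c, maxComb g e 0 c) ∈ W := fun c hc =>
    hW.mem_of_mem_mpOrtho_mpTop_of_le_of_ne_bot hcl (maxComb_mono hgF 0 c)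
      (fun j => ne_bot_of_gt (lt_max_of_lt_right (by simpa [e] using hc)))
      (hmod _ hFg _ (hrefl e) 0 c)
  have hcont (x : RmaxVec n) : Tendsto (fun c => maxComb x e 0 c) (𝓝 ⊥) (𝓝 x) := by
    simpa only [Function.comp_def, maxComb_bot_right] using
      ((continuous_maxComb_coeffs x e).comp (Continuous.prodMk_right 0)).tendsto ⊥
  exact hcl.mem_of_tendsto (((hcont F).prodMk_nhds (hcont g)).mono_left nhdsWithin_le_nhds)
    (eventually_nhdsWithin_of_forall hmem)

lemma IsCongruence.mpOrtho_mpTop_subset (hW : IsCongruence W) (hcl : IsClosed W) :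
    mpOrtho (mpTop W) ⊆ W := by
  rintro ⟨f, g⟩ hfg
  have hU := isCongruence_mpOrtho (mpTop W)
  have h1 : (f ⊔ g, g) ∈ W :=
    hW.mem_of_mem_mpOrtho_mpTop_of_le hcl le_sup_right (hU.sup_mem_of_mem hfg)
  have h2 : (f ⊔ g, f) ∈ W := hW.mem_of_mem_mpOrtho_mpTop_of_le hcl le_sup_left
    (by simpa only [sup_comm] using hU.sup_mem_of_mem (hU.2 _ _ hfg))
  obtain ⟨⟨-, -, htrans⟩, hsymm⟩ := hW
  exact htrans _ _ _ (hsymm _ _ h2) h1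

end Congruence

theorem biorthogonal_theorem_general (n : ℕ)
    (W : Set (RmaxVec n × RmaxVec n)) :
    (∃ V : Set (RmaxVec n), W = mpOrtho V) ↔
      (IsClosed W ∧ IsSubsemimodulePair W) ∧
      (∀ f : RmaxVec n, (f, f) ∈ W) ∧
      (∀ f g : RmaxVec n, (f, g) ∈ W → (g, f) ∈ W) ∧
      (∀ f g h : RmaxVec n, (f, g) ∈ W → (g, h) ∈ W → (f, h) ∈ W) := by
  constructor
  · rintro ⟨V, rfl⟩
    obtain ⟨⟨hmod, hrefl, htrans⟩, hsymm⟩ := isCongruence_mpOrtho V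
    exact ⟨⟨isClosed_mpOrtho V, hmod⟩, hrefl, hsymm, htrans⟩
  · rintro ⟨⟨hcl, hmod⟩, hrefl, hsymm, htrans⟩
    have hW : IsCongruence W := ⟨⟨hmod, hrefl, htrans⟩, hsymm⟩
    exact ⟨mpTop W, (subset_mpOrtho_mpTop W).antisymm (hW.mpOrtho_mpTop_subset hcl)⟩

/-- **Biorthogonal theorem** (Theorem 1.2 of the paper).
A subset `W ⊆ (ℝmax^n)²` is the orthogonal of a cone if, and only if,
(i) `W` is a closed max-plus subsemimodule, (ii) `W` contains the diagonal,
(iii) `W` is symmetric, and (iv) `W` is transitive. -/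
theorem biorthogonal_theorem (n : ℕ) (hn : 1 ≤ n)
    (W : Set (RmaxVec n × RmaxVec n)) :
    (∃ V : Set (RmaxVec n), W = mpOrtho V) ↔
      (IsClosed W ∧ IsSubsemimodulePair W) ∧
      (∀ f : RmaxVec n, (f, f) ∈ W) ∧
      (∀ f g : RmaxVec n, (f, g) ∈ W → (g, f) ∈ W) ∧
      (∀ f g h : RmaxVec n, (f, g) ∈ W → (g, h) ∈ W → (f, h) ∈ W) :=
  biorthogonal_theorem_general n W
end
end

section
/- Separation theorem for complete congruences (specialized to EReal^n): Let W ⊆ (EReal^n)^2 be a complete congruence and let s, t ∈ EReal^n be such that (s,t) ∉ W. Then there exists x ∈ EReal^n such that f∖x = g∖x for every (f,g) ∈ W, while s∖x ≠ t∖x. -/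
open scoped Classical

noncomputable section

/-- Vectors of the semimodule `EReal^n` over the completed max-plus
semiring `EReal = ℝ ∪ {±∞}`. -/
abbrev EVec (n : ℕ) := Fin n → EReal

/-- `W ⊆ (EReal^n)² ≅ EReal^{2n}` is a complete subsemimodule (with the
entrywise operations): it is stable under entrywise max, under the entrywise
addition of any scalar, and under arbitrary (entrywise) suprema. -/
def IsCompleteSubsemimoduleE {n : ℕ} (W : Set (EVec n × EVec n)) : Prop :=
  (∀ p ∈ W, ∀ q ∈ W, p ⊔ q ∈ W) ∧
  (∀ p ∈ W, ∀ lam : EReal,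
    ((fun i => p.1 i + lam, fun i => p.2 i + lam) : EVec n × EVec n) ∈ W) ∧
  (∀ Q : Set (EVec n × EVec n), Q ⊆ W → sSup Q ∈ W)

/-- A complete pre-congruence: a complete subsemimodule of `(EReal^n)²`
containing the diagonal and transitive. -/
def IsCompletePrecongruenceE {n : ℕ} (W : Set (EVec n × EVec n)) : Prop :=
  IsCompleteSubsemimoduleE W ∧ (∀ f : EVec n, (f, f) ∈ W) ∧
    ∀ f g h : EVec n, (f, g) ∈ W → (g, h) ∈ W → (f, h) ∈ W

/-- A complete polar cone: a complete pre-congruence such that `f ≤ g`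
implies `(f,g) ∈ W`. -/
def IsCompletePolarConeE {n : ℕ} (W : Set (EVec n × EVec n)) : Prop :=
  IsCompletePrecongruenceE W ∧ ∀ f g : EVec n, f ≤ g → (f, g) ∈ W

/-- A complete congruence: a symmetric complete pre-congruence. -/
def IsCompleteCongruenceE {n : ℕ} (W : Set (EVec n × EVec n)) : Prop :=
  IsCompletePrecongruenceE W ∧ ∀ f g : EVec n, (f, g) ∈ W → (g, f) ∈ W

/-- The entrywise supremum `ē(g) = sSup { f | (f,g) ∈ W }`. -/
def ebarE {n : ℕ} (W : Set (EVec n × EVec n)) (g : EVec n) : EVec n :=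
  sSup { f : EVec n | (f, g) ∈ W }

/-- The residuation `u∖x = sSup { λ | ∀ i, u_i + λ ≤ x_i }` in `EReal`. -/
def eresE {n : ℕ} (u x : EVec n) : EReal :=
  sSup { lam : EReal | ∀ i, u i + lam ≤ x i }

/-!
The separating vectors are the class maxima `ē(g) = sup {f | (f, g) ∈ W}`: completeness puts
`ē(g)` in the class of `g`, and transitivity makes it the largest element of that class.
If `x` is the largest element of its class, `(g, f) ∈ W` and `f + λ ≤ x`, then
`(g + λ ⊔ x, f + λ ⊔ x) = (g + λ ⊔ x, x) ∈ W`, so `g + λ ≤ x`; hence `f∖x = g∖x` on `W`.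
Since `u ≤ x ↔ 0 ≤ u∖x`, if neither `ē(s)` nor `ē(t)` separated `s` from `t`, then
`t ≤ ē(s)` and `s ≤ ē(t)`, and `s ~ ē(s) ~ s ⊔ t ~ ē(t) ~ t`.
-/

section

variable {n : ℕ}

theorem le_eresE_iff {u x : EVec n} {lam : EReal} :
    lam ≤ eresE u x ↔ ∀ i, u i + lam ≤ x i := by
  refine ⟨fun h i => ?_, fun h => le_sSup h⟩
  refine (add_le_add_right h _).trans (EReal.add_le_of_forall_lt fun a ha b hb => ?_)
  obtain ⟨mu, hmu, hb⟩ := lt_sSup_iff.mp hb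
  exact (add_le_add ha.le hb.le).trans (hmu i)

theorem zero_le_eresE_iff {u x : EVec n} : 0 ≤ eresE u x ↔ u ≤ x := by
  simp only [le_eresE_iff, add_zero, Pi.le_def]

variable {W : Set (EVec n × EVec n)}

theorem le_ebarE_self {g : EVec n} (hg : (g, g) ∈ W) : g ≤ ebarE W g :=
  le_sSup hg

theorem ebarE_mem (hW : IsCompleteSubsemimoduleE W) {g : EVec n} (hg : (g, g) ∈ W) :
    (ebarE W g, g) ∈ W := by
  have hclass : {p ∈ W | p.2 = g} ⊆ W := fun p hp => hp.1
  convert hW.2.2 _ hclass using 1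
  refine Prod.ext ?_ ?_
  · have : Prod.fst '' {p ∈ W | p.2 = g} = {f | (f, g) ∈ W} := by
      ext f
      simp
    rw [Prod.fst_sSup, this, ebarE]
  · have : Prod.snd '' {p ∈ W | p.2 = g} = {g} := by
      ext y
      simpa using fun hy : y = g => ⟨g, hy ▸ hg⟩
    rw [Prod.snd_sSup, this, sSup_singleton]

theorem le_ebarE_of_mem (hW : IsCompletePrecongruenceE W) {g h : EVec n}
    (hh : (h, ebarE W g) ∈ W) : h ≤ ebarE W g :=
  le_sSup (hW.2.2 _ _ _ hh (ebarE_mem hW.1 (hW.2.1 g)))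

theorem add_le_ebarE_of_mem (hW : IsCompletePrecongruenceE W) {f g g₀ : EVec n}
    (hgf : (g, f) ∈ W) {lam : EReal} (hf : ∀ i, f i + lam ≤ ebarE W g₀ i) :
    ∀ i, g i + lam ≤ ebarE W g₀ i := by
  have hmem : ((fun i => g i + lam) ⊔ ebarE W g₀, (fun i => f i + lam) ⊔ ebarE W g₀) ∈ W :=
    hW.1.1 _ (hW.1.2.1 _ hgf lam) _ (hW.2.1 _)
  rw [(sup_eq_right (a := fun i => f i + lam)).mpr hf] at hmem
  exact le_sup_left.trans (le_ebarE_of_mem hW hmem)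

theorem eresE_ebarE_eq_of_mem (hW : IsCompleteCongruenceE W) {f g : EVec n} (hfg : (f, g) ∈ W)
    (g₀ : EVec n) : eresE f (ebarE W g₀) = eresE g (ebarE W g₀) :=
  le_antisymm (sSup_le_sSup fun _ => add_le_ebarE_of_mem hW.1 (hW.2 _ _ hfg))
    (sSup_le_sSup fun _ => add_le_ebarE_of_mem hW.1 hfg)

theorem mem_sup_of_le_ebarE (hW : IsCompleteCongruenceE W) {s t : EVec n}
    (hs : s ≤ ebarE W t) : (t, s ⊔ t) ∈ W := by
  have ht := ebarE_mem hW.1.1 (hW.1.2.1 t)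
  have hmem : (s ⊔ ebarE W t, s ⊔ t) ∈ W := hW.1.1.1 _ (hW.1.2.1 s) _ ht
  rw [sup_eq_right.mpr hs] at hmem
  exact hW.1.2.2 _ _ _ (hW.2 _ _ ht) hmem

theorem mem_of_le_ebarE (hW : IsCompleteCongruenceE W) {s t : EVec n}
    (hs : s ≤ ebarE W t) (ht : t ≤ ebarE W s) : (s, t) ∈ W :=
  hW.1.2.2 _ _ _ (sup_comm t s ▸ mem_sup_of_le_ebarE hW ht) (hW.2 _ _ (mem_sup_of_le_ebarE hW hs))

end

/-- **Separation theorem for complete congruences** (Theorem 3.4 of the paper,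
specialized to `X = EReal^n`): if `W` is a complete congruence and
`(s,t) ∉ W`, then there is `x` with `f∖x = g∖x` for all `(f,g) ∈ W`, while
`s∖x ≠ t∖x`. -/
theorem separation_complete_congruence (n : ℕ) (W : Set (EVec n × EVec n))
    (hW : IsCompleteCongruenceE W) (s t : EVec n) (hst : (s, t) ∉ W) :
    ∃ x : EVec n,
      (∀ p ∈ W, eresE p.1 x = eresE p.2 x) ∧
      eresE s x ≠ eresE t x := by
  by_contra! h
  have hsep (g : EVec n) : eresE s (ebarE W g) = eresE t (ebarE W g) :=
    h _ fun _ hp => eresE_ebarE_eq_of_mem hW hp g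
  refine hst (mem_of_le_ebarE hW ?_ ?_)
  · rw [← zero_le_eresE_iff, hsep, zero_le_eresE_iff]
    exact le_ebarE_self (hW.1.2.1 t)
  · rw [← zero_le_eresE_iff, ← hsep, zero_le_eresE_iff]
    exact le_ebarE_self (hW.1.2.1 s)
end
end
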